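/- Let G be a finite simple graph that is r-regular and let (R,B) be a CNB-coloring of G. Then |R| = |B|, the number of edges with one endpoint in R and one endpoint in B equals (r+1)|V(G)|/4, and the number of edges with both endpoints in R equals the number of edges with both endpoints in B, both being equal to (r−1)|V(G)|/8. -/

import Mathlib

/-
At a red vertex the closed neighbourhood is balanced, so it has `(r - 1) / 2` red and
`(r + 1) / 2` blue neighbours, and symmetrically at a blue vertex. Summing `|N[v] ∩ R|` over all
`v` counts every red vertex `r + 1` times, and likewise for blue, so the CNB condition forces
`|R| = |B|`. The edge counts then follow from the handshake lemma for the edges inside a colour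
class and for the edges between the two classes.
-/

open scoped Classical

/-- An `(R, Rᶜ)`-coloring of `G` is a neighborhood balanced coloring (NB-coloring) if each
vertex has equally many red and blue vertices in its open neighborhood. -/
def SimpleGraph.IsNBColoring {V : Type*} [Fintype V] (G : SimpleGraph V) (R : Finset V) : Prop :=
  ∀ v : V, (G.neighborFinset v ∩ R).card = (G.neighborFinset v ∩ Rᶜ).card

/-- An `(R, Rᶜ)`-coloring of `G` is a closed neighborhood balanced coloring (CNB-coloring) if each
vertex has equally many red and blue vertices in its closed neighborhood. -/
def SimpleGraph.IsCNBColoring {V : Type*} [Fintype V] (G : SimpleGraph V) (R : Finset V) : Prop :=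
  ∀ v : V, (insert v (G.neighborFinset v) ∩ R).card = (insert v (G.neighborFinset v) ∩ Rᶜ).card

/-- The set of edges of `G` with both endpoints in `S`. -/
noncomputable def SimpleGraph.edgesWithin {V : Type*} [Fintype V] (G : SimpleGraph V)
    (S : Finset V) : Finset (Sym2 V) :=
  G.edgeFinset.filter (fun e => ∀ v ∈ e, v ∈ S)

/-- The set of edges of `G` with one endpoint in `S` and one endpoint in `T`. -/
noncomputable def SimpleGraph.edgesBetween {V : Type*} [Fintype V] (G : SimpleGraph V)
    (S T : Finset V) : Finset (Sym2 V) :=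
  G.edgeFinset.filter (fun e => (∃ v ∈ e, v ∈ S) ∧ (∃ v ∈ e, v ∈ T))

open Finset

namespace SimpleGraph

variable {V : Type*} [Fintype V] (G : SimpleGraph V)

theorem sum_card_filter_neighborFinset_eq_two_mul_card {F : Finset (Sym2 V)}
    (hF : F ⊆ G.edgeFinset) :
    ∑ v, #{u ∈ G.neighborFinset v | s(v, u) ∈ F} = 2 * #F := by
  set H := fromEdgeSet (F : Set (Sym2 V))
  have hH : H.edgeFinset = F := by
    ext e
    have : e ∈ F → ¬e.IsDiag := fun he =>
      G.not_isDiag_of_mem_edgeSet (mem_edgeFinset.mp (hF he))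
    simpa [H] using this
  have hdeg : ∀ v, #{u ∈ G.neighborFinset v | s(v, u) ∈ F} = H.degree v := fun v => by
    rw [← card_neighborFinset_eq_degree]
    congr 1
    ext u
    simp only [mem_filter, mem_neighborFinset, H, fromEdgeSet_adj, mem_coe]
    exact ⟨fun h => ⟨h.2, h.1.ne⟩, fun h => ⟨by simpa using hF h.1, h.1⟩⟩
  simp_rw [hdeg, H.sum_degrees_eq_twice_card_edges]
  convert congrArg (2 * #·) hH

theorem two_mul_card_edgesWithin (S : Finset V) :
    2 * #(G.edgesWithin S) = ∑ v ∈ S, #(G.neighborFinset v ∩ S) := by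
  have hfilter : ∀ v, {u ∈ G.neighborFinset v | s(v, u) ∈ G.edgesWithin S} =
      if v ∈ S then G.neighborFinset v ∩ S else ∅ := fun v => by
    ext u
    split_ifs with hv <;> simp [edgesWithin, hv]
  rw [← G.sum_card_filter_neighborFinset_eq_two_mul_card (F := G.edgesWithin S)
    (filter_subset _ _)]
  simp_rw [hfilter, apply_ite card, card_empty, Fintype.sum_ite_mem]

theorem two_mul_card_edgesBetween_compl (S : Finset V) :
    2 * #(G.edgesBetween S Sᶜ) =
      ∑ v ∈ S, #(G.neighborFinset v ∩ Sᶜ) +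
        ∑ v ∈ Sᶜ, #(G.neighborFinset v ∩ S) := by
  have hfilter : ∀ v, {u ∈ G.neighborFinset v | s(v, u) ∈ G.edgesBetween S Sᶜ} =
      if v ∈ S then G.neighborFinset v ∩ Sᶜ else G.neighborFinset v ∩ S := fun v => by
    ext u
    split_ifs with hv <;> simp [edgesBetween, hv]
  rw [← G.sum_card_filter_neighborFinset_eq_two_mul_card (F := G.edgesBetween S Sᶜ)
    (filter_subset _ _)]
  simp_rw [hfilter, apply_ite card, sum_ite, filter_mem_eq_inter, univ_inter]
  congr 2
  ext v
  simp

theorem sum_card_closedNeighborFinset_inter (S : Finset V) :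
    ∑ v, #(insert v (G.neighborFinset v) ∩ S) = ∑ u ∈ S, (G.degree u + 1) := by
  have hsymm : ∀ u v,
      u ∈ insert v (G.neighborFinset v) ↔ v ∈ insert u (G.neighborFinset u) := by
    simp [eq_comm, G.adj_comm]
  calc ∑ v, #(insert v (G.neighborFinset v) ∩ S)
      = ∑ v, ∑ u ∈ S, if v ∈ insert u (G.neighborFinset u) then 1 else 0 := by
        simp_rw [← hsymm, ← card_filter, filter_mem_eq_inter, inter_comm]
    _ = ∑ u ∈ S, #(insert u (G.neighborFinset u)) := by
        rw [sum_comm]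
        simp_rw [Fintype.sum_ite_mem, ← card_eq_sum_ones]
    _ = ∑ u ∈ S, (G.degree u + 1) := by
        simp_rw [card_insert_of_notMem (G.notMem_neighborFinset_self _),
          card_neighborFinset_eq_degree]

namespace IsCNBColoring

variable {G} {R : Finset V}

theorem compl (h : G.IsCNBColoring R) : G.IsCNBColoring Rᶜ := fun v => by
  rw [compl_compl]
  exact (h v).symm

theorem card_neighborFinset_inter_compl (h : G.IsCNBColoring R) {v : V} (hv : v ∈ R) :
    #(G.neighborFinset v ∩ Rᶜ) = #(G.neighborFinset v ∩ R) + 1 := by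
  have hv' := h v
  rwa [insert_inter_of_mem hv, insert_inter_of_notMem (by simpa using hv),
    card_insert_of_notMem (by simp), eq_comm] at hv'

theorem two_mul_card_neighborFinset_inter_add_one (h : G.IsCNBColoring R) {v : V} (hv : v ∈ R) :
    2 * #(G.neighborFinset v ∩ R) + 1 = G.degree v := by
  have hsplit := card_inter_add_card_sdiff (G.neighborFinset v) R
  rw [sdiff_eq_inter_compl, h.card_neighborFinset_inter_compl hv,
    card_neighborFinset_eq_degree] at hsplit
  omega

theorem two_mul_card_neighborFinset_inter_compl (h : G.IsCNBColoring R) {v : V} (hv : v ∈ R) :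
    2 * #(G.neighborFinset v ∩ Rᶜ) = G.degree v + 1 := by
  rw [h.card_neighborFinset_inter_compl hv,
    ← h.two_mul_card_neighborFinset_inter_add_one hv]
  ring

theorem card_eq_card_compl (h : G.IsCNBColoring R) {r : ℕ}
    (hreg : G.IsRegularOfDegree r) : #R = #Rᶜ := by
  refine Nat.eq_of_mul_eq_mul_left r.succ_pos ?_
  calc (r + 1) * #R = ∑ u ∈ R, (G.degree u + 1) := by simp [hreg _, mul_comm]
    _ = ∑ u ∈ Rᶜ, (G.degree u + 1) := by
      rw [← sum_card_closedNeighborFinset_inter, ← sum_card_closedNeighborFinset_inter]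
      exact sum_congr rfl fun v _ => h v
    _ = (r + 1) * #Rᶜ := by simp [hreg _, mul_comm]

theorem four_mul_card_edgesWithin (h : G.IsCNBColoring R) {r : ℕ}
    (hreg : G.IsRegularOfDegree r) : 4 * #(G.edgesWithin R) = (r - 1) * #R :=
  calc 4 * #(G.edgesWithin R) = ∑ v ∈ R, 2 * #(G.neighborFinset v ∩ R) := by
        rw [← mul_sum, ← two_mul_card_edgesWithin]; ring
    _ = ∑ v ∈ R, (r - 1) := sum_congr rfl fun v hv => by
        have := h.two_mul_card_neighborFinset_inter_add_one hv
        rw [hreg v] at this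
        omega
    _ = (r - 1) * #R := by rw [sum_const, smul_eq_mul, mul_comm]

theorem four_mul_card_edgesBetween_compl (h : G.IsCNBColoring R) {r : ℕ}
    (hreg : G.IsRegularOfDegree r) :
    4 * #(G.edgesBetween R Rᶜ) = (r + 1) * Fintype.card V :=
  calc 4 * #(G.edgesBetween R Rᶜ)
      = ∑ v ∈ R, 2 * #(G.neighborFinset v ∩ Rᶜ) +
          ∑ v ∈ Rᶜ, 2 * #(G.neighborFinset v ∩ Rᶜᶜ) := by
        rw [← mul_sum, ← mul_sum, ← mul_add, compl_compl, ← two_mul_card_edgesBetween_compl]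
        ring
    _ = ∑ v ∈ R, (r + 1) + ∑ v ∈ Rᶜ, (r + 1) := by
        congr 1 <;> refine sum_congr rfl fun v hv => ?_
        · rw [h.two_mul_card_neighborFinset_inter_compl hv, hreg v]
        · rw [h.compl.two_mul_card_neighborFinset_inter_compl hv, hreg v]
    _ = (r + 1) * Fintype.card V := by
        rw [sum_add_sum_compl, sum_const, card_univ, smul_eq_mul, mul_comm]

end IsCNBColoring

end SimpleGraph

/-- In a CNB-coloring of an `r`-regular graph `G`: `|R| = |B|`,
`|RB| = (r + 1)|V(G)| / 4`, and `|RR| = |BB| = (r − 1)|V(G)| / 8`. -/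
theorem cnb_regular_counts {V : Type*} [Fintype V] (G : SimpleGraph V) (r : ℕ)
    (hreg : G.IsRegularOfDegree r) (R : Finset V) (h : G.IsCNBColoring R) :
    R.card = Rᶜ.card ∧
    4 * (G.edgesBetween R Rᶜ).card = (r + 1) * Fintype.card V ∧
    (G.edgesWithin R).card = (G.edgesWithin Rᶜ).card ∧
    8 * (G.edgesWithin R).card = (r - 1) * Fintype.card V := by
  have hcard := h.card_eq_card_compl hreg
  have hwithin := h.four_mul_card_edgesWithin hreg
  have hwithin_compl := h.compl.four_mul_card_edgesWithin hreg
  rw [← hcard] at hwithin_compl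
  refine ⟨hcard, h.four_mul_card_edgesBetween_compl hreg, by omega, ?_⟩
  rw [← card_add_card_compl R, ← hcard]
  linear_combination 2 * hwithin
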